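/- arXiv:2101.02990 — 5 statements merged into one kernel-verified Lean document; each statement's English description precedes it below -/
import Mathlib

section
/- Let λ be a frequency satisfying (NC). Then there exists a frequency λ' = (λ'_n)_{n≥1} whose set of terms contains the set of terms of λ (i.e. {λ_n : n ∈ ℕ} ⊆ {λ'_n : n ∈ ℕ}) and such that for every δ > 0 there exists C > 0 with the property that for every n ∈ ℕ there exists m > n satisfying simultaneously: log(λ'_m + λ'_n) ≤ C·e^{δλ'_n}, −log(λ'_m − λ'_n) ≤ C·e^{δλ'_n}, and m − n ≤ C·e^{δλ'_n}. -/
open Filter Set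

namespace SuperNCAux

noncomputable section

variable (l : ℕ → ℝ)

def S : Set ℝ := Set.range l ∪ Set.range (fun k : ℕ => (k : ℝ))

def nxt (x : ℝ) : ℝ := sInf (S l ∩ Set.Ioi x)

def lext : ℕ → ℝ := fun n => (nxt l)^[n] 0

variable {l}

lemma nat_mem_S (k : ℕ) : ((k : ℝ)) ∈ S l := Or.inr ⟨k, rfl⟩

lemma zero_mem_S : (0 : ℝ) ∈ S l := by simpa using nat_mem_S (l := l) 0

lemma finite_le (htend : Tendsto l atTop atTop) (b : ℝ) :
    {k : ℕ | l k ≤ b}.Finite := by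
  obtain ⟨N, hN⟩ := eventually_atTop.1 (htend.eventually_gt_atTop b)
  refine (Set.finite_Iio N).subset fun k hk => ?_
  by_contra h
  exact absurd (hN k (le_of_not_gt h)) (not_lt.2 hk)

lemma finite_natle (b : ℝ) : {k : ℕ | (k : ℝ) ≤ b}.Finite := by
  refine (Set.finite_Iic ⌊b⌋₊).subset fun k hk => ?_
  exact Nat.le_floor hk

lemma finite_S_Ioc (htend : Tendsto l atTop atTop) (a b : ℝ) :
    (S l ∩ Set.Ioc a b).Finite := by
  have h1 : (S l ∩ Set.Ioc a b) ⊆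
      (l '' {k | l k ≤ b}) ∪ ((fun k : ℕ => (k : ℝ)) '' {k | (k : ℝ) ≤ b}) := by
    rintro s ⟨hs, _, hsb⟩
    rcases hs with ⟨k, rfl⟩ | ⟨k, rfl⟩
    · exact Or.inl ⟨k, hsb, rfl⟩
    · exact Or.inr ⟨k, hsb, rfl⟩
  exact (((finite_le htend b).image l).union ((finite_natle b).image _)).subset h1

lemma S_nonneg (hnonneg : ∀ n, 0 ≤ l n) : ∀ s ∈ S l, (0 : ℝ) ≤ s := by
  rintro s (⟨k, rfl⟩ | ⟨k, rfl⟩)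
  · exact hnonneg k
  · exact Nat.cast_nonneg k

lemma isLeast_nxt (htend : Tendsto l atTop atTop) (x : ℝ) :
    IsLeast (S l ∩ Set.Ioi x) (nxt l x) := by
  have hx1 : x < ((⌈x⌉₊ + 1 : ℕ) : ℝ) := by
    push_cast
    have := Nat.le_ceil x
    linarith
  have hne : (S l ∩ Set.Ioc x ((⌈x⌉₊ + 1 : ℕ) : ℝ)).Nonempty :=
    ⟨_, nat_mem_S _, hx1, le_refl _⟩
  have hfin := finite_S_Ioc htend x ((⌈x⌉₊ + 1 : ℕ) : ℝ)
  obtain ⟨t, htmem, htmin⟩ := Set.exists_min_image _ id hfin hne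
  have hleast : IsLeast (S l ∩ Set.Ioi x) t := by
    constructor
    · exact ⟨htmem.1, htmem.2.1⟩
    · rintro s ⟨hsS, hsx⟩
      by_cases hs : s ≤ ((⌈x⌉₊ + 1 : ℕ) : ℝ)
      · exact htmin s ⟨hsS, hsx, hs⟩
      · exact le_trans htmem.2.2 (le_of_not_ge hs)
  have : nxt l x = t := hleast.csInf_eq
  rw [this]
  exact hleast

lemma lext_succ (n : ℕ) : lext l (n + 1) = nxt l (lext l n) :=
  Function.iterate_succ_apply' _ _ _

lemma lext_zero : lext l 0 = 0 := rfl

lemma lext_mem (hnonneg : ∀ n, 0 ≤ l n) (htend : Tendsto l atTop atTop) :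
    ∀ n, lext l n ∈ S l := by
  intro n
  induction n with
  | zero => exact zero_mem_S
  | succ n _ => rw [lext_succ]; exact (isLeast_nxt htend _).1.1

lemma lext_strictMono (htend : Tendsto l atTop atTop) : StrictMono (lext l) := by
  apply strictMono_nat_of_lt_succ
  intro n
  rw [lext_succ]
  exact (isLeast_nxt htend _).1.2

lemma lext_nonneg (htend : Tendsto l atTop atTop) (n : ℕ) : 0 ≤ lext l n := by
  have := (lext_strictMono htend).monotone (Nat.zero_le n)
  rwa [lext_zero] at this

lemma lext_le_of_mem (htend : Tendsto l atTop atTop) {n : ℕ} {s : ℝ}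
    (hs : s ∈ S l) (hgt : lext l n < s) : lext l (n + 1) ≤ s := by
  rw [lext_succ]
  exact (isLeast_nxt htend _).2 ⟨hs, hgt⟩

lemma lext_surj (hnonneg : ∀ n, 0 ≤ l n) (htend : Tendsto l atTop atTop)
    {s : ℝ} (hs : s ∈ S l) : ∃ n, lext l n = s := by
  by_contra h
  push_neg at h
  have key : ∀ n, lext l n < s := by
    intro n
    induction n with
    | zero =>
        refine lt_of_le_of_ne ?_ (by simpa [lext_zero] using h 0)
        simpa [lext_zero] using S_nonneg hnonneg s hs
    | succ n ih => exact lt_of_le_of_ne (lext_le_of_mem htend hs ih) (h (n + 1))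
  have hinf : (S l ∩ Set.Ioc (-1 : ℝ) s).Infinite := by
    apply Set.infinite_of_injective_forall_mem
      (f := lext l) (lext_strictMono htend).injective
    intro n
    exact ⟨lext_mem hnonneg htend n,
      lt_of_lt_of_le (by norm_num) (lext_nonneg htend n), (key n).le⟩
  exact hinf (finite_S_Ioc htend _ _)

lemma lext_tendsto (hnonneg : ∀ n, 0 ≤ l n) (htend : Tendsto l atTop atTop) :
    Tendsto (lext l) atTop atTop := by
  apply tendsto_atTop_atTop_of_monotone (lext_strictMono htend).monotone
  intro b
  obtain ⟨n, hn⟩ := lext_surj hnonneg htend (nat_mem_S (l := l) ⌈b⌉₊)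
  exact ⟨n, by rw [hn]; exact Nat.le_ceil b⟩

lemma count_bound (hnonneg : ∀ n, 0 ≤ l n) (htend : Tendsto l atTop atTop)
    {n m : ℕ} (hnm : n ≤ m) {y : ℝ}
    (hy : lext l m ≤ y) (hy4 : y ≤ lext l n + 4)
    {p q : ℕ} (hlam : ∀ k, lext l n < l k → l k ≤ y → k ∈ Finset.Icc p q) :
    m - n ≤ (Finset.Icc p q).card + 4 := by
  set x := lext l n with hx
  have hx0 : 0 ≤ x := lext_nonneg htend n
  set T : Finset ℝ := (Finset.Icc p q).image l ∪
    (Finset.Icc (⌊x⌋₊ + 1) (⌊x⌋₊ + 4)).image (fun k : ℕ => (k : ℝ)) with hT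
  have hmem : ∀ j ∈ Finset.Ioc n m, lext l j ∈ T := by
    intro j hj
    rw [Finset.mem_Ioc] at hj
    have hgt : x < lext l j := (lext_strictMono htend) hj.1
    have hle : lext l j ≤ y := le_trans ((lext_strictMono htend).monotone hj.2) hy
    rcases lext_mem hnonneg htend j with ⟨k, hk⟩ | ⟨k, hk⟩
    · refine Finset.mem_union_left _ (Finset.mem_image.2 ⟨k, ?_, hk⟩)
      exact hlam k (by rw [hk]; exact hgt) (by rw [hk]; exact hle)
    · refine Finset.mem_union_right _ (Finset.mem_image.2 ⟨k, ?_, hk⟩)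
      rw [Finset.mem_Icc]
      have hk' : (k : ℝ) = lext l j := hk
      have h1 : x < (k : ℝ) := by rw [hk']; exact hgt
      have h2 : (k : ℝ) ≤ x + 4 := by rw [hk']; linarith
      have h3 : x < (⌊x⌋₊ : ℝ) + 1 := Nat.lt_floor_add_one x
      constructor
      · exact Nat.succ_le_of_lt ((Nat.floor_lt hx0).2 h1)
      · have : (k : ℝ) < ((⌊x⌋₊ + 5 : ℕ) : ℝ) := by push_cast; linarith
        have := Nat.cast_lt.1 this
        omega
  have hinj : Set.InjOn (lext l) (Finset.Ioc n m : Finset ℕ) :=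
    (lext_strictMono htend).injective.injOn
  have hcard := Finset.card_le_card_of_injOn (lext l) hmem hinj
  rw [Nat.card_Ioc] at hcard
  have h5 : T.card ≤ (Finset.Icc p q).card + 4 := by
    calc T.card ≤ ((Finset.Icc p q).image l).card +
        ((Finset.Icc (⌊x⌋₊ + 1) (⌊x⌋₊ + 4)).image (fun k : ℕ => (k : ℝ))).card :=
          Finset.card_union_le _ _
      _ ≤ (Finset.Icc p q).card + (Finset.Icc (⌊x⌋₊ + 1) (⌊x⌋₊ + 4)).card := by
          gcongr <;> exact Finset.card_image_le
      _ ≤ (Finset.Icc p q).card + 4 := by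
          have : (Finset.Icc (⌊x⌋₊ + 1) (⌊x⌋₊ + 4)).card = 4 := by
            rw [Nat.card_Icc]; omega
          omega
  omega

lemma key_ineq {δ x : ℝ} (hδ : 0 < δ) (hx : 0 ≤ x) :
    2 * x + 4 ≤ (2 / δ + 4) * Real.exp (δ * x) := by
  have h1 : δ * x + 1 ≤ Real.exp (δ * x) := Real.add_one_le_exp _
  have h2 : (1 : ℝ) ≤ Real.exp (δ * x) := Real.one_le_exp (by positivity)
  have h3 : x ≤ Real.exp (δ * x) / δ := by
    rw [le_div_iff₀ hδ]
    nlinarith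
  have h4 : 2 * x ≤ 2 / δ * Real.exp (δ * x) := by
    rw [div_mul_eq_mul_div, le_div_iff₀ hδ]
    nlinarith
  nlinarith

end

end SuperNCAux
open SuperNCAux

set_option maxHeartbeats 1000000

/-- If `λ` satisfies (NC), there is a frequency `λ'` containing all terms of `λ` such that
for all `δ > 0` there is `C > 0` so that for every `n` there is `m > n` with
`log(λ'_m + λ'_n) ≤ Ce^{δλ'_n}`, `−log(λ'_m − λ'_n) ≤ Ce^{δλ'_n}` and `m − n ≤ Ce^{δλ'_n}`. -/
theorem superNC (l : ℕ → ℝ) (hmono : StrictMono l) (hnonneg : ∀ n, 0 ≤ l n)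
    (htend : Tendsto l atTop atTop)
    (hNC : ∀ δ > (0 : ℝ), ∃ C > (0 : ℝ), ∀ n : ℕ, ∃ m : ℕ, n < m ∧
      Real.log ((l m + l n) / (l m - l n)) + ((m : ℝ) - (n : ℝ)) ≤ C * Real.exp (δ * l n)) :
    ∃ l' : ℕ → ℝ, StrictMono l' ∧ (∀ n, 0 ≤ l' n) ∧ Tendsto l' atTop atTop ∧
      Set.range l ⊆ Set.range l' ∧
      ∀ δ > (0 : ℝ), ∃ C > (0 : ℝ), ∀ n : ℕ, ∃ m : ℕ, n < m ∧
        Real.log (l' m + l' n) ≤ C * Real.exp (δ * l' n) ∧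
        -Real.log (l' m - l' n) ≤ C * Real.exp (δ * l' n) ∧
        ((m : ℝ) - (n : ℝ)) ≤ C * Real.exp (δ * l' n) := by
  classical
  refine ⟨lext l, lext_strictMono htend, lext_nonneg htend,
    lext_tendsto hnonneg htend, ?_, ?_⟩
  · rintro s ⟨k, rfl⟩
    obtain ⟨n, hn⟩ := lext_surj hnonneg htend (Or.inl ⟨k, rfl⟩)
    exact ⟨n, hn⟩
  · intro δ hδ
    obtain ⟨C, hC, hNCC⟩ := hNC δ hδ
    set C' : ℝ := C * Real.exp (2 * δ) + |Real.log (l 1)| + 2 / δ + 10 with hC'def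
    have hC'pos : 0 < C' := by positivity
    refine ⟨C', hC'pos, ?_⟩
    intro n
    set x := lext l n with hxdef
    have hx0 : 0 ≤ x := lext_nonneg htend n
    set E := Real.exp (δ * x) with hEdef
    have hE1 : 1 ≤ E := Real.one_le_exp (by positivity)
    have hE0 : 0 < E := Real.exp_pos _
    clear_value E x C'
    have hl1 : 0 < l 1 := lt_of_le_of_lt (hnonneg 0) (hmono (by norm_num))
    have habs : 0 ≤ |Real.log (l 1)| := abs_nonneg _
    have h2δ : 0 < 2 / δ := by positivity
    have hlog24 : Real.log (2 * x + 4) ≤ C' * E := by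
      have hpos : (0 : ℝ) < 2 * x + 4 := by linarith
      have h1 : Real.log (2 * x + 4) ≤ 2 * x + 4 - 1 := Real.log_le_sub_one_of_pos hpos
      have h2 := key_ineq hδ hx0
      have h3 : 2 / δ + 4 ≤ C' := by
        have hCe : 0 < C * Real.exp (2 * δ) := by positivity
        rw [hC'def]; linarith
      have h4 : (2 / δ + 4) * E ≤ C' * E := mul_le_mul_of_nonneg_right h3 hE0.le
      rw [← hEdef] at h2
      linarith
    have finish : ∀ t, t ∈ S l → x < t → t ≤ x + 4 → -Real.log (t - x) ≤ C' * E →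
        ∀ p q : ℕ, (∀ k, x < l k → l k ≤ t → k ∈ Finset.Icc p q) →
        ((Finset.Icc p q).card : ℝ) + 4 ≤ C' * E →
        ∃ m : ℕ, n < m ∧ Real.log (lext l m + x) ≤ C' * E ∧
          -Real.log (lext l m - x) ≤ C' * E ∧ ((m : ℝ) - (n : ℝ)) ≤ C' * E := by
      intro t htS htgt ht4 hgap p q hpq hcardC
      rw [hxdef] at hpq
      obtain ⟨m, hm⟩ := lext_surj hnonneg htend htS
      have hnm : n < m := (lext_strictMono htend).lt_iff_lt.1 (by rw [hm, ← hxdef]; exact htgt)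
      refine ⟨m, hnm, ?_, ?_, ?_⟩
      · rw [hm]
        have hpos : 0 < t + x := by linarith
        have h1 : Real.log (t + x) ≤ Real.log (2 * x + 4) :=
          Real.log_le_log hpos (by linarith)
        linarith
      · rw [hm]; exact hgap
      · have hcount := count_bound hnonneg htend hnm.le hm.le
          (by rw [← hxdef]; linarith) hpq
        have hc1 : ((m - n : ℕ) : ℝ) ≤ ((Finset.Icc p q).card : ℝ) + 4 := by
          exact_mod_cast hcount
        have hc2 : ((m - n : ℕ) : ℝ) = (m : ℝ) - (n : ℝ) := by
          push_cast [Nat.cast_sub hnm.le]; ring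
        linarith
    by_cases hcase : ∃ k, x ≤ l k ∧ l k ≤ x + 2
    · obtain ⟨p, hpx, hp2, hpmin⟩ :
          ∃ p, x ≤ l p ∧ l p ≤ x + 2 ∧ ∀ k, x ≤ l k → p ≤ k := by
        obtain ⟨k0, hk0, hk02⟩ := hcase
        have hex : ∃ k, x ≤ l k := ⟨k0, hk0⟩
        exact ⟨Nat.find hex, Nat.find_spec hex,
          le_trans (hmono.monotone (Nat.find_min' hex hk0)) hk02,
          fun k hk => Nat.find_min' hex hk⟩
      obtain ⟨q, hpq, hq⟩ := hNCC p
      have hlqp : l p < l q := hmono hpq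
      have hlp0 : 0 ≤ l p := hnonneg p
      have hsum_pos : 0 < l q + l p := by linarith
      have hdiff_pos : 0 < l q - l p := sub_pos.2 hlqp
      have hAeq : Real.log ((l q + l p) / (l q - l p)) =
          Real.log (l q + l p) - Real.log (l q - l p) :=
        Real.log_div (ne_of_gt hsum_pos) (ne_of_gt hdiff_pos)
      have hA0 : 0 ≤ Real.log ((l q + l p) / (l q - l p)) := by
        apply Real.log_nonneg
        rw [le_div_iff₀ hdiff_pos]
        linarith
      have hqp1 : (1 : ℝ) ≤ (q : ℝ) - p := by
        have : (p : ℝ) + 1 ≤ q := by exact_mod_cast hpq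
        linarith
      have hEp : Real.exp (δ * l p) ≤ Real.exp (2 * δ) * E := by
        rw [hEdef, ← Real.exp_add]
        apply Real.exp_le_exp.2
        nlinarith
      have hCE : C * Real.exp (δ * l p) ≤ C * Real.exp (2 * δ) * E := by
        rw [mul_assoc]; exact mul_le_mul_of_nonneg_left hEp hC.le
      have hqpB : (q : ℝ) - p ≤ C * Real.exp (2 * δ) * E := by linarith
      have hAB : Real.log (l q + l p) - Real.log (l q - l p) ≤
          C * Real.exp (2 * δ) * E := by rw [← hAeq]; linarith
      have hq1 : 1 ≤ q := by omega
      have hl1q : l 1 ≤ l q := hmono.monotone hq1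
      have hcardpq : ((Finset.Icc p q).card : ℝ) + 4 ≤ C' * E := by
        rw [Nat.card_Icc]
        have hple : p ≤ q + 1 := by omega
        have h1 : ((q + 1 - p : ℕ) : ℝ) = (q : ℝ) - p + 1 := by
          push_cast [Nat.cast_sub hple]; ring
        rw [h1]
        have h2 : C * Real.exp (2 * δ) + 5 ≤ C' := by rw [hC'def]; linarith
        have h3 : (C * Real.exp (2 * δ) + 5) * E ≤ C' * E :=
          mul_le_mul_of_nonneg_right h2 hE0.le
        have h4 : C * Real.exp (2 * δ) * E + 5 ≤ (C * Real.exp (2 * δ) + 5) * E := by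
          nlinarith [hE1]
        linarith
      by_cases hq4 : l q ≤ x + 4
      · refine finish (l q) (Or.inl ⟨q, rfl⟩) (lt_of_le_of_lt hpx hlqp) hq4 ?_ p q ?_ hcardpq
        · have hgap1 : 0 < l q - x := by linarith
          have h1 : Real.log (l q - l p) ≤ Real.log (l q - x) :=
            Real.log_le_log hdiff_pos (by linarith)
          have h2 : Real.log (l 1) ≤ Real.log (l q + l p) :=
            Real.log_le_log hl1 (by linarith)
          have h3 := neg_abs_le (Real.log (l 1))
          have h5 : C * Real.exp (2 * δ) + |Real.log (l 1)| ≤ C' := by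
            rw [hC'def]; linarith
          have h6 : (C * Real.exp (2 * δ) + |Real.log (l 1)|) * E ≤ C' * E :=
            mul_le_mul_of_nonneg_right h5 hE0.le
          have h7 : C * Real.exp (2 * δ) * E + |Real.log (l 1)| ≤
              (C * Real.exp (2 * δ) + |Real.log (l 1)|) * E := by
            have h8 : 0 ≤ |Real.log (l 1)| * (E - 1) := mul_nonneg habs (by linarith)
            nlinarith [h8]
          linarith
        · intro k h1 h2
          rw [Finset.mem_Icc]
          exact ⟨hpmin k h1.le, hmono.le_iff_le.1 h2⟩
      · push_neg at hq4
        have htgt : x + 1 < ((⌊x⌋₊ + 2 : ℕ) : ℝ) := by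
          push_cast; linarith [Nat.lt_floor_add_one x]
        have ht2 : ((⌊x⌋₊ + 2 : ℕ) : ℝ) ≤ x + 2 := by
          push_cast; linarith [Nat.floor_le hx0]
        refine finish ((⌊x⌋₊ + 2 : ℕ) : ℝ) (nat_mem_S _) (by linarith) (by linarith) ?_ p q ?_ hcardpq
        · have h1 : 0 ≤ Real.log (((⌊x⌋₊ + 2 : ℕ) : ℝ) - x) :=
            Real.log_nonneg (by linarith)
          have h2 := (mul_pos hC'pos hE0).le
          linarith
        · intro k h1 h2
          rw [Finset.mem_Icc]
          refine ⟨hpmin k h1.le, ?_⟩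
          have hkq : l k < l q := by linarith
          exact (hmono.lt_iff_lt.1 hkq).le
    · have htgt : x + 1 < ((⌊x⌋₊ + 2 : ℕ) : ℝ) := by
        push_cast; linarith [Nat.lt_floor_add_one x]
      have ht2 : ((⌊x⌋₊ + 2 : ℕ) : ℝ) ≤ x + 2 := by
        push_cast; linarith [Nat.floor_le hx0]
      refine finish ((⌊x⌋₊ + 2 : ℕ) : ℝ) (nat_mem_S _) (by linarith) (by linarith) ?_ 1 0 ?_ ?_
      · have h1 : 0 ≤ Real.log (((⌊x⌋₊ + 2 : ℕ) : ℝ) - x) :=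
          Real.log_nonneg (by linarith)
        have h2 := (mul_pos hC'pos hE0).le
        linarith
      · intro k h1 h2
        exact absurd ⟨k, h1.le, le_trans h2 ht2⟩ hcase
      · have h0 : (Finset.Icc 1 0 : Finset ℕ).card = 0 := by
          rw [Nat.card_Icc]
        have hCe : 0 < C * Real.exp (2 * δ) := by positivity
        rw [h0]
        have h10 : (10 : ℝ) ≤ C' := by rw [hC'def]; linarith
        have h11 : (10 : ℝ) * 1 ≤ C' * E :=
          mul_le_mul h10 hE1 (by norm_num) (by linarith)
        push_cast
        linarith
end

section
/- For a > 0 and h > 0 let ψ_{a,h}(t) := (sin((a+h)t)/t) · (sin(ht)/(ht)) for t ≠ 0. Let a : ℝ → (0,∞) and h : ℝ → (0,∞) be measurable functions and let κ > 0 be such that a(t) + h(t) ≤ κ and h(t) ≥ κ^{−1} for all t ∈ ℝ. Then ∫_ℝ |ψ_{a(t),h(t)}(t)| dt ≤ 4 + 4·log κ. -/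
open MeasureTheory

/-- `sinc x = sin x / x`, extended continuously by `1` at `x = 0`. -/
noncomputable def sinc (x : ℝ) : ℝ := if x = 0 then 1 else Real.sin x / x

/-- `ψ_{a,h}(t) = (sin((a+h)t)/t)·(sin(ht)/(ht))`, with the continuous extension at `t=0`. -/
noncomputable def psiAH (a h t : ℝ) : ℝ := (a + h) * sinc ((a + h) * t) * sinc (h * t)

/-!
Since `c · sinc (c t) = sin (c t) / t`, the function `ψ_{a,h}` is bounded by `a + h ≤ κ`,
by `1/|t|`, and by `1/(h t²) ≤ κ/t²`. Using each bound on the range `|t| ≤ κ⁻¹`,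
`κ⁻¹ < |t| ≤ κ`, `κ < |t|` respectively gives an even majorant whose integral is
`2 + 4 log κ + 2`; the hypotheses force `κ⁻¹ ≤ κ`, so the three ranges are in this order.
-/

open Set

lemma abs_sinc_le_one (x : ℝ) : |sinc x| ≤ 1 := by
  unfold sinc
  split_ifs with hx
  · simp
  · rw [abs_div, div_le_one (abs_pos.2 hx)]
    exact Real.abs_sin_le_abs

lemma abs_sinc_le_inv_abs {x : ℝ} (hx : x ≠ 0) : |sinc x| ≤ |x|⁻¹ := by
  rw [sinc, if_neg hx, abs_div, div_eq_mul_inv]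
  exact mul_le_of_le_one_left (by positivity) (Real.abs_sin_le_one x)

lemma mul_sinc_mul (c : ℝ) {t : ℝ} (ht : t ≠ 0) : c * sinc (c * t) = Real.sin (c * t) / t := by
  by_cases hc : c = 0
  · simp [hc]
  · rw [sinc, if_neg (mul_ne_zero hc ht)]
    field_simp

lemma abs_psiAH_le_add {a h : ℝ} (hah : 0 ≤ a + h) (t : ℝ) : |psiAH a h t| ≤ a + h := by
  rw [psiAH, abs_mul, abs_mul, abs_of_nonneg hah]
  calc (a + h) * |sinc ((a + h) * t)| * |sinc (h * t)| ≤ (a + h) * 1 * 1 := by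
        gcongr <;> exact abs_sinc_le_one _
    _ = a + h := by ring

lemma abs_psiAH_le_inv_abs (a h : ℝ) {t : ℝ} (ht : t ≠ 0) : |psiAH a h t| ≤ |t|⁻¹ := by
  rw [psiAH, mul_sinc_mul _ ht, abs_mul, abs_div]
  calc |Real.sin ((a + h) * t)| / |t| * |sinc (h * t)| ≤ 1 / |t| * 1 := by
        gcongr
        · exact Real.abs_sin_le_one _
        · exact abs_sinc_le_one _
    _ = |t|⁻¹ := by rw [one_div, mul_one]

lemma abs_psiAH_le_inv_mul_sq (a : ℝ) {h t : ℝ} (hh : h ≠ 0) (ht : t ≠ 0) :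
    |psiAH a h t| ≤ (|h| * t ^ 2)⁻¹ := by
  rw [psiAH, mul_sinc_mul _ ht, abs_mul, abs_div]
  calc |Real.sin ((a + h) * t)| / |t| * |sinc (h * t)| ≤ 1 / |t| * |h * t|⁻¹ := by
        gcongr
        · exact Real.abs_sin_le_one _
        · exact abs_sinc_le_inv_abs (mul_ne_zero hh ht)
    _ = (|h| * t ^ 2)⁻¹ := by rw [abs_mul, ← sq_abs t]; field_simp

noncomputable def psiMajorant (κ s : ℝ) : ℝ :=
  if s ≤ κ⁻¹ then κ else if s ≤ κ then s⁻¹ else κ / s ^ 2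

lemma abs_psiAH_le_psiMajorant {κ a h : ℝ} (hκ : 0 < κ) (ha : 0 ≤ a) (hub : a + h ≤ κ)
    (hlb : κ⁻¹ ≤ h) (t : ℝ) : |psiAH a h t| ≤ psiMajorant κ |t| := by
  have hh : 0 < h := (inv_pos.2 hκ).trans_le hlb
  unfold psiMajorant
  split_ifs with hsmall hmid
  · exact (abs_psiAH_le_add (by linarith) t).trans hub
  · have ht : t ≠ 0 := abs_pos.1 ((inv_pos.2 hκ).trans (not_le.1 hsmall))
    exact abs_psiAH_le_inv_abs a h ht
  · have ht : t ≠ 0 := abs_pos.1 (hκ.trans (not_le.1 hmid))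
    calc |psiAH a h t| ≤ (|h| * t ^ 2)⁻¹ := abs_psiAH_le_inv_mul_sq a hh.ne' ht
      _ = h⁻¹ / |t| ^ 2 := by rw [abs_of_pos hh, sq_abs, mul_inv, div_eq_mul_inv]
      _ ≤ κ / |t| ^ 2 := by gcongr; exact inv_le_of_inv_le₀ hκ hlb

lemma lintegral_comp_abs (f : ℝ → ENNReal) : ∫⁻ x, f |x| = 2 * ∫⁻ x in Ioi 0, f x := by
  have h_neg : ∫⁻ x in Iic 0, f |x| = ∫⁻ x in Ioi 0, f x := calc
    ∫⁻ x in Iic 0, f |x| = ∫⁻ x in Neg.neg ⁻¹' Ici 0, f (-x) := by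
      rw [neg_preimage, neg_Ici, neg_zero]
      exact setLIntegral_congr_fun measurableSet_Iic fun x hx => by rw [abs_of_nonpos hx]
    _ = ∫⁻ x in Ici 0, f x :=
      (Measure.measurePreserving_neg volume).setLIntegral_comp_preimage_emb
        (Homeomorph.neg ℝ).measurableEmbedding f _
    _ = ∫⁻ x in Ioi 0, f x := setLIntegral_congr Ioi_ae_eq_Ici.symm
  have h_pos : ∫⁻ x in Ioi 0, f |x| = ∫⁻ x in Ioi 0, f x :=
    setLIntegral_congr_fun measurableSet_Ioi fun x hx => by rw [abs_of_pos hx]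
  rw [← setLIntegral_univ, ← Iic_union_Ioi (a := (0 : ℝ)),
    lintegral_union measurableSet_Ioi (Iic_disjoint_Ioi le_rfl), h_neg, h_pos, two_mul]

lemma setLIntegral_Ioc_inv {a b : ℝ} (ha : 0 < a) (hab : a ≤ b) :
    ∫⁻ x in Ioc a b, ENNReal.ofReal x⁻¹ = ENNReal.ofReal (Real.log (b / a)) := by
  have hb : 0 < b := ha.trans_le hab
  have hint : IntervalIntegrable (fun x : ℝ => x⁻¹) volume a b :=
    intervalIntegral.intervalIntegrable_inv
      (fun x hx => (ha.trans_le (by rw [uIcc_of_le hab] at hx; exact hx.1)).ne') continuousOn_id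
  rw [← ofReal_integral_eq_lintegral_ofReal hint.1, ← intervalIntegral.integral_of_le hab,
    integral_inv_of_pos ha hb]
  exact (ae_restrict_iff' measurableSet_Ioc).2
    (.of_forall fun x hx => (inv_pos.2 (ha.trans hx.1)).le)

lemma setLIntegral_Ioi_div_sq {b c : ℝ} (hb : 0 ≤ b) (hc : 0 < c) :
    ∫⁻ x in Ioi c, ENNReal.ofReal (b / x ^ 2) = ENNReal.ofReal (b / c) := by
  have h_rpow : EqOn (fun x : ℝ => b / x ^ 2) (fun x => b * x ^ (-2 : ℝ)) (Ioi c) := fun x hx => by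
    dsimp only
    rw [Real.rpow_neg (hc.trans hx).le, div_eq_mul_inv]
    norm_num [Real.rpow_natCast]
  have hint : IntegrableOn (fun x : ℝ => b * x ^ (-2 : ℝ)) (Ioi c) :=
    (integrableOn_Ioi_rpow_of_lt (by norm_num) hc).const_mul b
  rw [setLIntegral_congr_fun measurableSet_Ioi fun x hx => congrArg ENNReal.ofReal (h_rpow hx),
    ← ofReal_integral_eq_lintegral_ofReal hint, integral_const_mul,
    integral_Ioi_rpow_of_lt (by norm_num) hc]
  · norm_num [Real.rpow_neg_one, div_eq_mul_inv]
  · exact (ae_restrict_iff' measurableSet_Ioi).2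
      (.of_forall fun x hx => by have := hc.trans hx; positivity)

lemma setLIntegral_psiMajorant_Ioi {κ : ℝ} (hκ : 1 ≤ κ) :
    ∫⁻ s in Ioi 0, ENNReal.ofReal (psiMajorant κ s) = ENNReal.ofReal (2 + 2 * Real.log κ) := by
  have hκ0 : 0 < κ := one_pos.trans_le hκ
  have hinv : 0 < κ⁻¹ := inv_pos.2 hκ0
  have hinv_le : κ⁻¹ ≤ κ := (inv_le_one_of_one_le₀ hκ).trans hκ
  have h_small : ∫⁻ s in Ioc 0 κ⁻¹, ENNReal.ofReal (psiMajorant κ s) = 1 := by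
    rw [setLIntegral_congr_fun measurableSet_Ioc fun s hs => by rw [psiMajorant, if_pos hs.2],
      setLIntegral_const, Real.volume_Ioc, sub_zero, ← ENNReal.ofReal_mul hκ0.le,
      mul_inv_cancel₀ hκ0.ne', ENNReal.ofReal_one]
  have h_mid :
      ∫⁻ s in Ioc κ⁻¹ κ, ENNReal.ofReal (psiMajorant κ s) = ENNReal.ofReal (2 * Real.log κ) := by
    rw [setLIntegral_congr_fun measurableSet_Ioc fun s hs => by
        rw [psiMajorant, if_neg (not_le.2 hs.1), if_pos hs.2],
      setLIntegral_Ioc_inv hinv hinv_le, div_inv_eq_mul, Real.log_mul hκ0.ne' hκ0.ne', two_mul]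
  have h_tail : ∫⁻ s in Ioi κ, ENNReal.ofReal (psiMajorant κ s) = 1 := by
    rw [setLIntegral_congr_fun measurableSet_Ioi fun s hs => by
        rw [psiMajorant, if_neg (not_le.2 (hinv_le.trans_lt hs)), if_neg (not_le.2 hs)],
      setLIntegral_Ioi_div_sq hκ0.le hκ0, div_self hκ0.ne', ENNReal.ofReal_one]
  have hlog : 0 ≤ 2 * Real.log κ := by have := Real.log_nonneg hκ; positivity
  rw [← Ioc_union_Ioi_eq_Ioi (hinv.le.trans hinv_le), ← Ioc_union_Ioc_eq_Ioc hinv.le hinv_le,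
    lintegral_union measurableSet_Ioi
      (disjoint_union_left.2 ⟨Ioc_disjoint_Ioi hinv_le, Ioc_disjoint_Ioi_same⟩),
    lintegral_union measurableSet_Ioc (Ioc_disjoint_Ioc_of_le le_rfl), h_small, h_mid, h_tail,
    ← ENNReal.ofReal_one, ← ENNReal.ofReal_add zero_le_one hlog,
    ← ENNReal.ofReal_add (by positivity) zero_le_one]
  ring_nf

theorem psiAH_integral_bound_general (a h : ℝ → ℝ)
    (κ : ℝ) (hκ : 0 < κ) (hapos : ∀ t, 0 < a t)
    (hub : ∀ t, a t + h t ≤ κ) (hlb : ∀ t, κ⁻¹ ≤ h t) :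
    ∫⁻ t : ℝ, ENNReal.ofReal |psiAH (a t) (h t) t| ≤ ENNReal.ofReal (4 + 4 * Real.log κ) := by
  have hκ_inv : κ⁻¹ ≤ κ := (hlb 0).trans (by linarith [hapos 0, hub 0])
  have hκ1 : 1 ≤ κ := not_lt.1 fun hlt => (hκ_inv.trans hlt.le).not_gt ((one_lt_inv₀ hκ).2 hlt)
  calc ∫⁻ t, ENNReal.ofReal |psiAH (a t) (h t) t|
      ≤ ∫⁻ t, ENNReal.ofReal (psiMajorant κ |t|) := lintegral_mono fun t =>
        ENNReal.ofReal_le_ofReal (abs_psiAH_le_psiMajorant hκ (hapos t).le (hub t) (hlb t) t)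
    _ = 2 * ENNReal.ofReal (2 + 2 * Real.log κ) := by
        rw [lintegral_comp_abs fun s => ENNReal.ofReal (psiMajorant κ s),
          setLIntegral_psiMajorant_Ioi hκ1]
    _ = ENNReal.ofReal (4 + 4 * Real.log κ) := by
        rw [← ENNReal.ofReal_ofNat 2, ← ENNReal.ofReal_mul zero_le_two]
        ring_nf

/-- If `a, h : ℝ → (0,∞)` are measurable with `a(t)+h(t) ≤ κ` and `h(t) ≥ κ⁻¹` for all `t`,
then `∫ |ψ_{a(t),h(t)}(t)| dt ≤ 4 + 4 log κ`. -/
theorem psiAH_integral_bound (a h : ℝ → ℝ) (ha : Measurable a) (hh : Measurable h)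
    (κ : ℝ) (hκ : 0 < κ) (hapos : ∀ t, 0 < a t) (hhpos : ∀ t, 0 < h t)
    (hub : ∀ t, a t + h t ≤ κ) (hlb : ∀ t, κ⁻¹ ≤ h t) :
    ∫⁻ t : ℝ, ENNReal.ofReal |psiAH (a t) (h t) t| ≤ ENNReal.ofReal (4 + 4 * Real.log κ) :=
  psiAH_integral_bound_general a h κ hκ hapos hub hlb
end

section
/- Let λ be a frequency with L(λ) := limsup_{n→∞} (log n)/λ_n < ∞, let k ≥ 1 be an integer, and let σ > (k−1)·L(λ)/2. Then sup_{μ>0} e^{−2μσ}·card{(n₁,…,n_k) ∈ ℕ^k : λ_{n₁} + ⋯ + λ_{n_k} = μ} < ∞; consequently (by the coefficient estimate for T_σ) for every square-summable sequence (a_n) of complex numbers, the family b_μ := e^{−μσ}·∑_{(n₁,…,n_k): λ_{n₁}+⋯+λ_{n_k}=μ} a_{n₁}⋯a_{n_k}, indexed by μ ∈ λ^{*k}, is square-summable, i.e. T_σ maps H_2(λ) into H_{2k}(λ). -/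
/-!
Fix `c > L(λ)` with `(k - 1) c ≤ 2σ`. Eventually `log (n + 1) < c λ_n`, so at most
`N + e^{cμ}` indices satisfy `λ_n ≤ μ`. Since `λ ≥ 0` is injective, a `k`-tuple with
`λ_{n₁} + ⋯ + λ_{n_k} = μ` is determined by its first `k - 1` entries, each with `λ ≤ μ`, so this
level has at most `(N + 1)^{k-1} e^{2σμ}` elements: this is the first claim. For the second,
Cauchy–Schwarz on each level bounds `|b_μ|²` by `(N + 1)^{k-1}` times the level's share of
`∑_v ∏_i |a_{v_i}|² = (∑_n |a_n|²)^k`.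
-/

open Filter ENNReal

open Finset in
theorem norm_mul_sum_sq_le_card_mul_sum_sq {ι R : Type*} [SeminormedRing R] (s : Finset ι)
    (w : R) (x : ι → R) : ‖w * ∑ i ∈ s, x i‖ ^ 2 ≤ ‖w‖ ^ 2 * #s * ∑ i ∈ s, ‖x i‖ ^ 2 := by
  have hsum : ‖∑ i ∈ s, x i‖ ^ 2 ≤ #s * ∑ i ∈ s, ‖x i‖ ^ 2 :=
    (pow_le_pow_left₀ (norm_nonneg _) (norm_sum_le _ _) 2).trans sq_sum_le_card_mul_sum_sq
  calc ‖w * ∑ i ∈ s, x i‖ ^ 2 ≤ (‖w‖ * ‖∑ i ∈ s, x i‖) ^ 2 :=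
        pow_le_pow_left₀ (norm_nonneg _) (norm_mul_le _ _) 2
    _ ≤ ‖w‖ ^ 2 * (#s * ∑ i ∈ s, ‖x i‖ ^ 2) := by rw [mul_pow]; gcongr
    _ = _ := by ring

theorem coe_nnnorm_sq_eq_ofReal {E : Type*} [SeminormedAddGroup E] (z : E) :
    (‖z‖₊ : ℝ≥0∞) ^ 2 = ENNReal.ofReal (‖z‖ ^ 2) := by
  rw [ENNReal.ofReal_pow (norm_nonneg z), ofReal_norm, enorm_eq_nnnorm]

theorem nnnorm_mul_finsum_mem_sq_le {V R : Type*} [SeminormedRing R] {F : Set V} (hF : F.Finite)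
    (w : R) (x : V → R) {C : ℝ} (hC : ‖w‖ ^ 2 * F.ncard ≤ C) :
    (‖w * ∑ᶠ v ∈ F, x v‖₊ : ℝ≥0∞) ^ 2 ≤ ENNReal.ofReal C * ∑' v : F, (‖x v‖₊ : ℝ≥0∞) ^ 2 := by
  lift F to Finset V using hF
  rw [Set.ncard_coe_finset] at hC
  have hC₀ : 0 ≤ C := (by positivity : (0 : ℝ) ≤ _).trans hC
  rw [finsum_mem_coe_finset, Finset.tsum_subtype' F fun v ↦ (‖x v‖₊ : ℝ≥0∞) ^ 2]
  simp only [coe_nnnorm_sq_eq_ofReal]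
  rw [← ENNReal.ofReal_sum_of_nonneg (fun _ _ ↦ by positivity), ← ENNReal.ofReal_mul hC₀]
  refine ENNReal.ofReal_le_ofReal ((norm_mul_sum_sq_le_card_mul_sum_sq F w x).trans ?_)
  gcongr

theorem tsum_range_nnnorm_mul_finsum_sq_le {V β R : Type*} [SeminormedRing R] (φ : V → β)
    (hφ : ∀ b, (φ ⁻¹' {b}).Finite) (w : β → R) (x : V → R) {C : ℝ}
    (hC : ∀ b ∈ Set.range φ, ‖w b‖ ^ 2 * (φ ⁻¹' {b}).ncard ≤ C) :
    ∑' b : Set.range φ, (‖w b * ∑ᶠ v ∈ φ ⁻¹' {(b : β)}, x v‖₊ : ℝ≥0∞) ^ 2 ≤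
      ENNReal.ofReal C * ∑' v, (‖x v‖₊ : ℝ≥0∞) ^ 2 :=
  calc _ ≤ ∑' b : Set.range φ, ENNReal.ofReal C * ∑' v : φ ⁻¹' {(b : β)}, (‖x v‖₊ : ℝ≥0∞) ^ 2 :=
        ENNReal.tsum_le_tsum fun b ↦ nnnorm_mul_finsum_mem_sq_le (hφ b) _ x (hC b b.2)
    _ = ENNReal.ofReal C * ∑' b : Set.range φ, ∑' v : φ ⁻¹' {(b : β)}, (‖x v‖₊ : ℝ≥0∞) ^ 2 :=
        ENNReal.tsum_mul_left
    _ ≤ ENNReal.ofReal C * ∑' b, ∑' v : φ ⁻¹' {b}, (‖x v‖₊ : ℝ≥0∞) ^ 2 := by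
        gcongr
        exact ENNReal.tsum_comp_le_tsum_of_injective Subtype.val_injective _
    _ = ENNReal.ofReal C * ∑' v, (‖x v‖₊ : ℝ≥0∞) ^ 2 :=
        congrArg _ (ENNReal.tsum_fiberwise (fun v ↦ (‖x v‖₊ : ℝ≥0∞) ^ 2) φ)

theorem ENNReal.tsum_fin_pi_prod_eq_pow {α : Type*} (f : α → ℝ≥0∞) (m : ℕ) :
    ∑' v : Fin m → α, ∏ i, f (v i) = (∑' a, f a) ^ m := by
  induction m with
  | zero => simp
  | succ m ih =>
    rw [← (Fin.consEquiv fun _ ↦ α).tsum_eq, ENNReal.tsum_prod', pow_succ', ← ih]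
    simp [Fin.consEquiv_apply, Fin.prod_univ_succ, ENNReal.tsum_mul_left, ENNReal.tsum_mul_right]

section Fibers

variable {α : Type*} {l : α → ℝ}

theorem setOf_sum_eq_subset_pi {ι : Type*} [Fintype ι] (hl : ∀ a, 0 ≤ l a) (μ : ℝ) :
    {v : ι → α | ∑ i, l (v i) = μ} ⊆ Set.univ.pi fun _ ↦ {a | l a ≤ μ} := by
  rintro v rfl i -
  exact Finset.single_le_sum (fun j _ ↦ hl (v j)) (Finset.mem_univ i)

theorem finite_setOf_sum_eq {ι : Type*} [Fintype ι] (hl : ∀ a, 0 ≤ l a) {μ : ℝ}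
    (hμ : {a | l a ≤ μ}.Finite) : {v : ι → α | ∑ i, l (v i) = μ}.Finite :=
  (Set.Finite.pi fun _ ↦ hμ).subset (setOf_sum_eq_subset_pi hl μ)

/-- Dropping the last coordinate is injective on a fiber, because `l` is. -/
theorem ncard_setOf_sum_eq_le (hl : Function.Injective l) (hl₀ : ∀ a, 0 ≤ l a) {μ : ℝ}
    (hμ : {a | l a ≤ μ}.Finite) (m : ℕ) :
    {v : Fin (m + 1) → α | ∑ i, l (v i) = μ}.ncard ≤ {a | l a ≤ μ}.ncard ^ m := by
  have hpi : ((Set.univ.pi fun _ : Fin m ↦ {a | l a ≤ μ}).ncard : ℕ∞) =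
      ({a | l a ≤ μ}.ncard ^ m : ℕ) := by
    rw [(Set.Finite.pi fun _ ↦ hμ).cast_ncard_eq, Set.encard_pi_eq_prod_encard, Nat.cast_pow,
      hμ.cast_ncard_eq, Finset.prod_const, Finset.card_univ, Fintype.card_fin]
  rw [← Nat.cast_inj.mp hpi]
  refine Set.ncard_le_ncard_of_injOn Fin.init
    (fun v hv i _ ↦ setOf_sum_eq_subset_pi hl₀ μ hv i.castSucc (Set.mem_univ _))
    (fun v hv w hw hvw ↦ ?_) (Set.Finite.pi fun _ ↦ hμ)
  have hinit : ∀ i : Fin m, v i.castSucc = w i.castSucc := congrFun hvw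
  have hlast : l (v (Fin.last m)) = l (w (Fin.last m)) := by
    rw [Set.mem_ofPred_eq, Fin.sum_univ_castSucc] at hv hw
    simp only [hinit] at hv
    linarith
  calc v = Fin.snoc (Fin.init v) (v (Fin.last m)) := (Fin.snoc_init_self v).symm
    _ = Fin.snoc (Fin.init w) (w (Fin.last m)) := by rw [hvw, hl hlast]
    _ = w := Fin.snoc_init_self w

theorem exp_mul_ncard_setOf_sum_eq_le (hl : Function.Injective l) (hl₀ : ∀ a, 0 ≤ l a)
    {c σ : ℝ} (hc : 0 ≤ c) {m : ℕ} (hσ : m * c ≤ 2 * σ) {N : ℕ}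
    (hN : ∀ μ : ℝ, {a | l a ≤ μ}.Finite ∧ ({a | l a ≤ μ}.ncard : ℝ) ≤ N + Real.exp (c * μ))
    {μ : ℝ} (hμ : 0 ≤ μ) :
    Real.exp (-2 * μ * σ) * {v : Fin (m + 1) → α | ∑ i, l (v i) = μ}.ncard ≤ (N + 1) ^ m := by
  have hexp : 1 ≤ Real.exp (c * μ) := Real.one_le_exp (by positivity)
  have hcard : ({v : Fin (m + 1) → α | ∑ i, l (v i) = μ}.ncard : ℝ) ≤
      (N + 1) ^ m * Real.exp (2 * σ * μ) :=
    calc _ ≤ ({a | l a ≤ μ}.ncard : ℝ) ^ m := by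
          exact_mod_cast ncard_setOf_sum_eq_le hl hl₀ (hN μ).1 m
      _ ≤ ((N + 1) * Real.exp (c * μ)) ^ m := by
          gcongr
          exact (hN μ).2.trans (by nlinarith)
      _ = (N + 1) ^ m * Real.exp (m * c * μ) := by
          rw [mul_pow, ← Real.exp_nat_mul, mul_assoc]
      _ ≤ (N + 1) ^ m * Real.exp (2 * σ * μ) := by gcongr
  calc _ ≤ Real.exp (-2 * μ * σ) * ((N + 1) ^ m * Real.exp (2 * σ * μ)) := by gcongr
    _ = (N + 1) ^ m := by
      rw [mul_left_comm, ← Real.exp_add, show -2 * μ * σ + 2 * σ * μ = 0 by ring,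
        Real.exp_zero, mul_one]

end Fibers

theorem eventually_log_lt_mul_of_limsup_lt {l : ℕ → ℝ} (hpos : ∀ᶠ n in atTop, 0 < l n)
    {c : ℝ} (h : limsup (fun n : ℕ ↦ ENNReal.ofReal (Real.log (n + 1) / l n)) atTop <
      ENNReal.ofReal c) :
    ∀ᶠ n : ℕ in atTop, Real.log (n + 1) < c * l n := by
  filter_upwards [eventually_lt_of_limsup_lt h, hpos] with n hn hln
  rw [ENNReal.ofReal_lt_ofReal_iff', div_lt_iff₀ hln] at hn
  exact hn.1

theorem exists_forall_ncard_setOf_le_le {l : ℕ → ℝ} {c : ℝ} (hc : 0 ≤ c)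
    (h : ∀ᶠ n : ℕ in atTop, Real.log (n + 1) < c * l n) :
    ∃ N : ℕ, ∀ μ : ℝ,
      {n | l n ≤ μ}.Finite ∧ ({n | l n ≤ μ}.ncard : ℝ) ≤ N + Real.exp (c * μ) := by
  obtain ⟨N, hN⟩ := eventually_atTop.mp h
  refine ⟨N, fun μ ↦ ?_⟩
  have hsub : {n | l n ≤ μ} ⊆ Finset.range (N + ⌊Real.exp (c * μ)⌋₊) := by
    intro n (hn : l n ≤ μ)
    rw [Finset.coe_range, Set.mem_Iio]
    refine (lt_or_ge n N).elim (fun hnN ↦ by omega) fun hNn ↦ ?_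
    have hlog : Real.log (n + 1) < c * μ := (hN n hNn).trans_le (by gcongr)
    have : n + 1 ≤ ⌊Real.exp (c * μ)⌋₊ := by
      rw [Nat.le_floor_iff (Real.exp_nonneg _)]
      push_cast
      exact ((Real.log_lt_iff_lt_exp (by positivity)).mp hlog).le
    omega
  refine ⟨(Finset.range _).finite_toSet.subset hsub, ?_⟩
  calc ({n | l n ≤ μ}.ncard : ℝ) ≤ ((N + ⌊Real.exp (c * μ)⌋₊ : ℕ) : ℝ) := by
        exact_mod_cast (Set.ncard_le_ncard hsub (Finset.finite_toSet _)).trans_eq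
          (by rw [Set.ncard_coe_finset, Finset.card_range])
    _ ≤ N + Real.exp (c * μ) := by
        push_cast
        gcongr
        exact Nat.floor_le (Real.exp_nonneg _)

theorem translation_H2_H2k_of_L_finite_general (l : ℕ → ℝ) (hmono : StrictMono l)
    (hnonneg : ∀ n, 0 ≤ l n)
    (L : ℝ≥0∞)
    (hL : L = Filter.limsup (fun n : ℕ => ENNReal.ofReal (Real.log (n + 1) / l n)) atTop)
    (hLfin : L ≠ ⊤)
    (k : ℕ) (hk : 1 ≤ k) (σ : ℝ) (hσ : ((k : ℝ) - 1) * L.toReal / 2 < σ) :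
    (∃ C : ℝ, ∀ μ > (0 : ℝ),
      Real.exp (-2 * μ * σ) *
        (Set.ncard {v : Fin k → ℕ | ∑ i, l (v i) = μ} : ℝ) ≤ C) ∧
    ∀ a : ℕ → ℂ, Summable (fun n => ‖a n‖ ^ 2) →
      ∑' μ : {x : ℝ | ∃ v : Fin k → ℕ, ∑ i, l (v i) = x},
          ((‖(Real.exp (-(μ : ℝ) * σ) : ℂ) *
              ∑ᶠ v ∈ {v : Fin k → ℕ | ∑ i, l (v i) = (μ : ℝ)}, ∏ i, a (v i)‖₊ : ℝ≥0∞) ^ 2)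
        < ⊤ := by
  obtain ⟨m, rfl⟩ := Nat.exists_eq_add_of_le' hk
  set ε := (2 * σ - m * L.toReal) / (m + 1)
  have hε : 0 < ε := div_pos (by push_cast at hσ; linarith) (by positivity)
  have hmε : (m + 1) * ε = 2 * σ - m * L.toReal := mul_div_cancel₀ _ (by positivity)
  set c := L.toReal + ε
  have hc : 0 ≤ c := by positivity
  have hmc : m * c ≤ 2 * σ := by linarith
  have hLc : L < ENNReal.ofReal c := by
    rwa [ENNReal.lt_ofReal_iff_toReal_lt hLfin, lt_add_iff_pos_right]
  have hlog : ∀ᶠ n : ℕ in atTop, Real.log (n + 1) < c * l n :=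
    eventually_log_lt_mul_of_limsup_lt
      ((eventually_gt_atTop 0).mono fun n hn ↦ (hnonneg 0).trans_lt (hmono hn)) (hL ▸ hLc)
  obtain ⟨N, hN⟩ := exists_forall_ncard_setOf_le_le hc hlog
  have hcount : ∀ μ : ℝ, 0 ≤ μ → Real.exp (-2 * μ * σ) *
      {v : Fin (m + 1) → ℕ | ∑ i, l (v i) = μ}.ncard ≤ (N + 1) ^ m :=
    fun μ ↦ exp_mul_ncard_setOf_sum_eq_le hmono.injective hnonneg hc hmc hN
  refine ⟨⟨_, fun μ hμ ↦ hcount μ hμ.le⟩, fun a ha ↦ ?_⟩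
  have hweight : ∀ μ ∈ Set.range fun v : Fin (m + 1) → ℕ ↦ ∑ i, l (v i),
      ‖(Real.exp (-μ * σ) : ℂ)‖ ^ 2 * {v : Fin (m + 1) → ℕ | ∑ i, l (v i) = μ}.ncard ≤
        (N + 1) ^ m := by
    rintro _ ⟨v, rfl⟩
    rw [Complex.norm_real, Real.norm_of_nonneg (Real.exp_nonneg _), ← Real.exp_nat_mul]
    convert hcount _ (Finset.sum_nonneg fun i _ ↦ hnonneg (v i)) using 3
    push_cast
    ring
  have ha' : ∑' n, (‖a n‖₊ : ℝ≥0∞) ^ 2 ≠ ⊤ := by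
    simp only [coe_nnnorm_sq_eq_ofReal,
      ← ENNReal.ofReal_tsum_of_nonneg (fun n ↦ by positivity) ha]
    exact ofReal_ne_top
  calc _ ≤ ENNReal.ofReal ((N + 1) ^ m) *
          ∑' v : Fin (m + 1) → ℕ, (‖∏ i, a (v i)‖₊ : ℝ≥0∞) ^ 2 :=
        tsum_range_nnnorm_mul_finsum_sq_le (fun v : Fin (m + 1) → ℕ ↦ ∑ i, l (v i))
          (fun μ ↦ finite_setOf_sum_eq hnonneg (hN μ).1) _ _ hweight
    _ = ENNReal.ofReal ((N + 1) ^ m) * (∑' n, (‖a n‖₊ : ℝ≥0∞) ^ 2) ^ (m + 1) := by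
        rw [← ENNReal.tsum_fin_pi_prod_eq_pow]
        simp only [nnnorm_prod, ENNReal.ofNNReal_finsetProd, Finset.prod_pow]
    _ < ⊤ := mul_lt_top ofReal_lt_top (pow_lt_top ha'.lt_top)

/-- If `L(λ) < ∞`, `k ≥ 1` and `σ > (k−1)L(λ)/2`, then
`sup_{μ>0} e^{−2μσ}·card{(n₁,…,n_k) : λ_{n₁}+⋯+λ_{n_k} = μ} < ∞`; consequently, for every
square-summable `(a_n)`, the family `b_μ = e^{−μσ} ∑_{λ_{n₁}+⋯+λ_{n_k}=μ} a_{n₁}⋯a_{n_k}`,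
`μ ∈ λ^{*k}`, is square-summable, i.e. `T_σ` maps `H_2(λ)` into `H_{2k}(λ)`. -/
theorem translation_H2_H2k_of_L_finite (l : ℕ → ℝ) (hmono : StrictMono l)
    (hnonneg : ∀ n, 0 ≤ l n) (htend : Tendsto l atTop atTop)
    (L : ℝ≥0∞)
    (hL : L = Filter.limsup (fun n : ℕ => ENNReal.ofReal (Real.log (n + 1) / l n)) atTop)
    (hLfin : L ≠ ⊤)
    (k : ℕ) (hk : 1 ≤ k) (σ : ℝ) (hσ : ((k : ℝ) - 1) * L.toReal / 2 < σ) :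
    (∃ C : ℝ, ∀ μ > (0 : ℝ),
      Real.exp (-2 * μ * σ) *
        (Set.ncard {v : Fin k → ℕ | ∑ i, l (v i) = μ} : ℝ) ≤ C) ∧
    ∀ a : ℕ → ℂ, Summable (fun n => ‖a n‖ ^ 2) →
      ∑' μ : {x : ℝ | ∃ v : Fin k → ℕ, ∑ i, l (v i) = x},
          ((‖(Real.exp (-(μ : ℝ) * σ) : ℂ) *
              ∑ᶠ v ∈ {v : Fin k → ℕ | ∑ i, l (v i) = (μ : ℝ)}, ∏ i, a (v i)‖₊ : ℝ≥0∞) ^ 2)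
        < ⊤ :=
  translation_H2_H2k_of_L_finite_general l hmono hnonneg L hL hLfin k hk σ hσ
end

section
/- Let b, c > 0 and define λ_j := b + j·c for integers j ≥ 0. Then for every integer k ≥ 1 there exist γ_k ∈ (0,1] and δ_k > 0 such that for every integer n ≥ 2^k and every nonnegative integer ℓ with (k − γ_k)·n ≤ ℓ ≤ (k + γ_k)·n, card{(j₁,…,j_k) ∈ {0,1,…,2n}^k : λ_{j₁} + ⋯ + λ_{j_k} = k·b + ℓ·c} ≥ δ_k·n^{k−1}. -/
/-- Combinatorial lemma: for `λ_j = b + jc` and every `k ≥ 1` there are `γ_k ∈ (0,1]` and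
`δ_k > 0` such that for all `n ≥ 2^k` and all integers `ℓ ∈ [(k−γ_k)n, (k+γ_k)n]`,
`card{(j₁,…,j_k) ∈ {0,…,2n}^k : λ_{j₁}+⋯+λ_{j_k} = kb + ℓc} ≥ δ_k n^{k−1}`. -/
theorem arithmetic_progression_representations (b c : ℝ) (hb : 0 < b) (hc : 0 < c)
    (k : ℕ) (hk : 1 ≤ k) :
    ∃ γ : ℝ, 0 < γ ∧ γ ≤ 1 ∧ ∃ δ : ℝ, 0 < δ ∧
      ∀ n : ℕ, 2 ^ k ≤ n → ∀ L : ℕ,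
        ((k : ℝ) - γ) * n ≤ L → (L : ℝ) ≤ ((k : ℝ) + γ) * n →
        δ * (n : ℝ) ^ (k - 1) ≤
          (Set.ncard {v : Fin k → ℕ | (∀ i, v i ≤ 2 * n) ∧
            (∑ i, (b + (v i : ℝ) * c)) = k * b + L * c} : ℝ) := by
  obtain ⟨m, rfl⟩ : ∃ m, k = m + 1 := ⟨k - 1, (Nat.succ_pred_eq_of_pos hk).symm⟩
  refine ⟨1/2, by norm_num, by norm_num, (1/(2*(m+1)))^m, by positivity, ?_⟩
  intro n hn L hL1 hL2
  have hn1 : 1 ≤ n := le_trans Nat.one_le_two_pow hn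
  set s := n / (2*(m+1)) with hs
  have hsm : s * (2*(m+1)) ≤ n := Nat.div_mul_le_self _ _
  have hsn : s ≤ n := le_trans (Nat.le_mul_of_pos_right s (by positivity)) hsm
  -- cast the two real hypotheses to natural inequalities
  have h2L1 : (2*m+1) * n ≤ 2 * L := by
    have h : ((2*m+1 : ℕ) * n : ℝ) ≤ ((2 * L : ℕ) : ℝ) := by push_cast at hL1 ⊢; linarith
    exact_mod_cast h
  have h2L2 : 2 * L ≤ (2*m+3) * n := by
    have h : ((2 * L : ℕ) : ℝ) ≤ ((2*m+3 : ℕ) * n : ℝ) := by push_cast at hL2 ⊢; linarith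
    exact_mod_cast h
  set W : Finset (Fin m → ℕ) := Fintype.piFinset (fun _ => Finset.range (s+1)) with hW
  set F : (Fin m → ℕ) → (Fin (m+1) → ℕ) := fun w i =>
    if h : (i:ℕ) < m then n + w ⟨i, h⟩ else L - (m*n + ∑ j, w j) with hF
  -- basic facts for w ∈ W
  have hsumw : ∀ w ∈ W, ∑ j, w j ≤ m * s := by
    intro w hw
    rw [Fintype.mem_piFinset] at hw
    calc ∑ j, w j ≤ ∑ _j : Fin m, s :=
          Finset.sum_le_sum (fun j _ => Nat.lt_succ_iff.mp (Finset.mem_range.mp (hw j)))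
      _ = m * s := by simp [Finset.sum_const, mul_comm]
  have hms : 2 * (m * s) ≤ n := by
    have : 2 * (m * s) ≤ s * (2*(m+1)) := by ring_nf; nlinarith [Nat.zero_le s]
    omega
  have key1 : ∀ w ∈ W, m*n + ∑ j, w j ≤ L := by
    intro w hw
    have h1 := hsumw w hw
    have h2 : (2*m+1) * n = 2*(m*n) + n := by ring
    omega
  have key2 : ∀ w ∈ W, L - (m*n + ∑ j, w j) ≤ 2*n := by
    intro w hw
    have h2 : (2*m+3) * n = 2*(m*n) + 3*n := by ring
    omega
  -- sum of coordinates of F w equals L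
  have hFsum : ∀ w ∈ W, ∑ i, F w i = L := by
    intro w hw
    have : ∑ i, F w i = (∑ i : Fin m, F w i.castSucc) + F w (Fin.last m) :=
      Fin.sum_univ_castSucc _
    rw [this]
    have h1 : ∀ i : Fin m, F w i.castSucc = n + w i := by
      intro i
      simp only [hF, Fin.coe_castSucc, i.isLt, dif_pos, Fin.eta]
    have h2 : F w (Fin.last m) = L - (m*n + ∑ j, w j) := by
      simp [hF, Fin.val_last]
    simp only [h1, h2, Finset.sum_add_distrib, Finset.sum_const, Finset.card_univ,
      Fintype.card_fin, smul_eq_mul]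
    have := key1 w hw
    omega
  -- membership of F w in the set
  set S : Set (Fin (m+1) → ℕ) := {v : Fin (m+1) → ℕ | (∀ i, v i ≤ 2 * n) ∧
      (∑ i, (b + (v i : ℝ) * c)) = ((m+1 : ℕ) : ℝ) * b + L * c} with hS
  have hmem : ∀ w ∈ W, F w ∈ S := by
    intro w hw
    constructor
    · intro i
      by_cases h : (i:ℕ) < m
      · simp only [hF, dif_pos h]
        have hws : w ⟨i, h⟩ ≤ s := by
          rw [Fintype.mem_piFinset] at hw
          exact Nat.lt_succ_iff.mp (Finset.mem_range.mp (hw _))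
        omega
      · simp only [hF, dif_neg h]
        exact key2 w hw
    · have hsum := hFsum w hw
      have heq : ∑ i, (b + (F w i : ℝ) * c) = ((m+1:ℕ):ℝ) * b + (∑ i, ((F w i : ℝ))) * c := by
        rw [Finset.sum_add_distrib, Finset.sum_mul]
        push_cast
        simp [Finset.sum_const]
      rw [heq]
      congr 2
      rw [← Nat.cast_sum, hsum]
  -- injectivity of F on W
  have hinj : Set.InjOn F W := by
    intro w1 _ w2 _ h
    funext i
    have h2 := congrFun h i.castSucc
    simp only [hF, Fin.coe_castSucc, i.isLt, dif_pos, Fin.eta] at h2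
    omega
  -- the set S is finite
  have hSfin : S.Finite := by
    apply Set.Finite.subset (Set.Finite.pi (fun _ : Fin (m+1) => Set.finite_Iic (2*n)))
    intro v hv
    simp only [Set.mem_pi, Set.mem_univ, Set.mem_Iic]
    intro i _
    exact hv.1 i
  -- card bound
  have hcard : (W.image F).card = (s+1)^m := by
    rw [Finset.card_image_of_injOn hinj, hW, Fintype.card_piFinset]
    simp
  have hsub : ↑(W.image F) ⊆ S := by
    intro v hv
    simp only [Finset.coe_image, Set.mem_image, Finset.mem_coe] at hv
    obtain ⟨w, hw, rfl⟩ := hv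
    exact hmem w hw
  have hncard : (s+1)^m ≤ S.ncard := by
    rw [← hcard, ← Set.ncard_coe_finset]
    exact Set.ncard_le_ncard hsub hSfin
  -- final real estimate
  have hreal : ((n : ℝ)) / (2*(m+1)) < (s : ℝ) + 1 := by
    rw [div_lt_iff₀ (by positivity)]
    have : n < (s+1) * (2*(m+1)) := by
      have hd : 0 < 2*(m+1) := by positivity
      have h1 := Nat.div_add_mod n (2*(m+1))
      have h2 := Nat.mod_lt n hd
      have h3 : (s+1) * (2*(m+1)) = s * (2*(m+1)) + 2*(m+1) := by ring
      have h4 : s * (2*(m+1)) = (2*(m+1)) * (n / (2*(m+1))) := by rw [hs]; ring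
      omega
    exact_mod_cast this
  have hpow : (1/(2*((m:ℝ)+1)))^m * (n:ℝ)^m ≤ ((s:ℝ)+1)^m := by
    rw [← mul_pow]
    apply pow_le_pow_left₀ (by positivity)
    rw [one_div, inv_mul_eq_div]
    exact le_of_lt hreal
  calc (1/(2*((m:ℝ)+1)))^m * (n:ℝ)^(m+1-1)
      = (1/(2*((m:ℝ)+1)))^m * (n:ℝ)^m := by norm_num
    _ ≤ ((s:ℝ)+1)^m := hpow
    _ = (((s+1)^m : ℕ) : ℝ) := by push_cast; ring
    _ ≤ (S.ncard : ℝ) := by exact_mod_cast hncard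
end

section
/- Let (b_n)_{n≥1} and (c_n)_{n≥1} be sequences of positive real numbers such that: for every N ≥ 1 the real numbers b_1, …, b_N, c_1, …, c_N are linearly independent over ℚ; 2n + 1 ≤ e^{b_n} for every n; and n·c_n ≤ 1 for every n. Define a sequence (λ_n)_{n≥1} by λ_{m²+j} := b_m + j·c_m for m ≥ 1 and j = 0, …, 2m. Then for every integer k ≥ 1 there exists C_k > 0 such that for all μ > 0, card{(n₁,…,n_k) ∈ ℕ^k : λ_{n₁} + ⋯ + λ_{n_k} = μ} ≤ C_k·exp((k−1)·μ/k). -/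
/-!
Write `n = m² + j` with `m = ⌊√n⌋` the level of `n`. By ℚ-linear independence, the value of
`λ_{n₁} + ⋯ + λ_{n_k}` determines, for each level `m`, how many coordinates lie at level `m` and
the sum of their remainders `j` (the `profile`). Hence a representation of `μ` is determined by its
level pattern, with at most `k ^ k` choices since the levels are those of any one representation,
and by the remainders of all coordinates except the last one at each level, with at most
`∏ (2 m_i + 1) ≤ exp (∑ b_{m_i})` choices. Each `b_m` occurs at most `k` times in
`∑ b_{m_i} ≤ μ`, so dropping one coordinate per level leaves at most `(k - 1) μ / k`.
-/

open Finset

namespace RepresentationCount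

def sqrtRem (n : ℕ) : ℕ := n - n.sqrt ^ 2

lemma sqrt_sq_add_sqrtRem (n : ℕ) : n.sqrt ^ 2 + sqrtRem n = n :=
  Nat.add_sub_cancel' (Nat.sqrt_le' n)

lemma sqrtRem_le (n : ℕ) : sqrtRem n ≤ 2 * n.sqrt := by
  have := Nat.succ_eq_add_one _ ▸ Nat.lt_succ_sqrt' n
  have : (n.sqrt + 1) ^ 2 = n.sqrt ^ 2 + 2 * n.sqrt + 1 := by ring
  unfold sqrtRem
  omega

lemma linearIndepOn_of_forall_fin {M : Type*} [AddCommGroup M] [Module ℚ M] {b c : ℕ → M}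
    (hind : ∀ N : ℕ, 1 ≤ N →
      LinearIndependent ℚ (fun i : Fin N ⊕ Fin N =>
        (Sum.elim (fun j : Fin N => b (j.1 + 1)) (fun j : Fin N => c (j.1 + 1)) i))) :
    LinearIndepOn ℚ (Sum.elim b c) {x | 1 ≤ x.elim id id} := by
  let e (N : ℕ) : Fin N ⊕ Fin N → ℕ ⊕ ℕ := Sum.map (·.1 + 1) (·.1 + 1)
  have he (N : ℕ) : Function.Injective (e N) := by
    apply Function.Injective.sumMap <;> exact fun i j h => Fin.ext (by simpa using h)
  have hmono : Monotone fun N => Set.range (e N) := by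
    intro N M hNM x ⟨y, hy⟩
    subst hy
    rcases y with j | j
    · exact ⟨.inl ⟨j, by omega⟩, rfl⟩
    · exact ⟨.inr ⟨j, by omega⟩, rfl⟩
  refine (linearIndepOn_iUnion_of_directed hmono.directed_le fun N => ?_).mono ?_
  · rcases Nat.eq_zero_or_pos N with rfl | hN
    · simp [Set.range_eq_empty]
    · rw [linearIndepOn_range_iff (he N), Sum.elim_comp_map]
      exact hind N hN
  · rintro (m | m) hm <;> simp only [Set.mem_ofPred_eq, Sum.elim_inl, Sum.elim_inr, id] at hm <;>
      refine Set.mem_iUnion.2 ⟨m, ?_⟩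
    · exact ⟨.inl ⟨m - 1, by omega⟩, by simp [e]; omega⟩
    · exact ⟨.inr ⟨m - 1, by omega⟩, by simp [e]; omega⟩

section Profile

variable {ι M : Type*} [Fintype ι] [AddCommGroup M] [Module ℚ M]

noncomputable def profile (v : ι → ℕ) : ℕ ⊕ ℕ →₀ ℚ :=
  ∑ i, (Finsupp.single (Sum.inl (v i).sqrt) (1 : ℚ)
    + Finsupp.single (Sum.inr (v i).sqrt) (sqrtRem (v i) : ℚ))

lemma profile_inl (v : ι → ℕ) (m : ℕ) : profile v (.inl m) = #{i | (v i).sqrt = m} := by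
  simp [profile, Finsupp.finsetSum_apply, Finsupp.single_apply, eq_comm]

lemma profile_inr (v : ι → ℕ) (m : ℕ) :
    profile v (.inr m) = ∑ i with (v i).sqrt = m, sqrtRem (v i) := by
  simp [profile, Finsupp.finsetSum_apply, Finsupp.single_apply, eq_comm, Finset.sum_ite]

lemma linearCombination_profile (b c : ℕ → M) (v : ι → ℕ) :
    Finsupp.linearCombination ℚ (Sum.elim b c) (profile v)
      = ∑ i, (b (v i).sqrt + sqrtRem (v i) • c (v i).sqrt) := by
  simp [profile, Nat.cast_smul_eq_nsmul]

lemma profile_mem_supported {v : ι → ℕ} (hv : ∀ i, 1 ≤ v i) :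
    profile v ∈ Finsupp.supported ℚ ℚ {x | 1 ≤ x.elim id id} := by
  refine Submodule.sum_mem _ fun i _ => Submodule.add_mem _ ?_ ?_ <;>
    exact Finsupp.single_mem_supported ℚ _ (Nat.sqrt_pos.2 (hv i))

lemma profile_eq_of_sum_eq {b c : ℕ → M}
    (hbc : LinearIndepOn ℚ (Sum.elim b c) {x | 1 ≤ x.elim id id})
    {v w : ι → ℕ} (hv : ∀ i, 1 ≤ v i) (hw : ∀ i, 1 ≤ w i)
    (h : ∑ i, (b (v i).sqrt + sqrtRem (v i) • c (v i).sqrt)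
      = ∑ i, (b (w i).sqrt + sqrtRem (w i) • c (w i).sqrt)) :
    profile v = profile w :=
  sub_eq_zero.1 <| linearIndepOn_iff.1 hbc _
    (Submodule.sub_mem _ (profile_mem_supported hv) (profile_mem_supported hw))
    (by rw [map_sub, linearCombination_profile, linearCombination_profile, h, sub_self])

end Profile

section LastInFiber

variable {ι α M : Type*}

lemma sum_comp_le_card_smul_sum_image [Fintype ι] [AddCommMonoid M] [PartialOrder M]
    [IsOrderedAddMonoid M] [DecidableEq α] (f : ι → α) (w : α → M) (hw : ∀ i, 0 ≤ w (f i)) :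
    ∑ i, w (f i) ≤ Fintype.card ι • ∑ a ∈ univ.image f, w a := by
  rw [Finset.sum_comp, Finset.smul_sum]
  refine Finset.sum_le_sum fun a ha => ?_
  obtain ⟨i, -, rfl⟩ := Finset.mem_image.1 ha
  exact nsmul_le_nsmul_left (hw i) (Finset.card_le_univ _)

variable [LinearOrder ι]

def IsLastInFiber (f : ι → α) (i : ι) : Prop := ∀ j, f j = f i → j ≤ i

lemma IsLastInFiber.eq {f : ι → α} {p q : ι} (hp : IsLastInFiber f p) (hq : IsLastInFiber f q)
    (h : f p = f q) : p = q :=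
  le_antisymm (hq p h) (hp q h.symm)

variable [Fintype ι]

instance [DecidableEq α] (f : ι → α) : DecidablePred (IsLastInFiber f) :=
  fun i => inferInstanceAs (Decidable (∀ j, f j = f i → j ≤ i))

lemma exists_isLastInFiber (f : ι → α) (i : ι) : ∃ p, f p = f i ∧ IsLastInFiber f p := by
  classical
  obtain ⟨p, hp, hmax⟩ := Finset.exists_max_image {j | f j = f i} id ⟨i, by simp⟩
  exact ⟨p, (Finset.mem_filter.1 hp).2, fun j hj =>
    hmax j (Finset.mem_filter.2 ⟨Finset.mem_univ j, hj.trans (Finset.mem_filter.1 hp).2⟩)⟩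

lemma eq_of_sum_fiber_eq_of_eqOn_not_isLastInFiber [DecidableEq α] [AddCancelCommMonoid M]
    {f : ι → α} {r s : ι → M} (hsum : ∀ a, ∑ i with f i = a, r i = ∑ i with f i = a, s i)
    (h : ∀ i, ¬ IsLastInFiber f i → r i = s i) : r = s := by
  funext i
  by_cases hi : IsLastInFiber f i
  swap
  · exact h i hi
  have hmem : i ∈ ({j | f j = f i} : Finset ι) := by simp
  have hrest : ∀ j ∈ ({j | f j = f i} : Finset ι).erase i, r j = s j := fun j hj => by
    obtain ⟨hji, hj⟩ := Finset.mem_erase.1 hj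
    exact h j fun hj' => hji (hj'.eq hi (Finset.mem_filter.1 hj).2)
  have := hsum (f i)
  rwa [← Finset.add_sum_erase _ _ hmem, ← Finset.add_sum_erase _ _ hmem,
    Finset.sum_congr rfl hrest, add_left_inj] at this

lemma sum_isLastInFiber [DecidableEq α] [AddCommMonoid M] (f : ι → α) (w : α → M) :
    ∑ i with IsLastInFiber f i, w (f i) = ∑ a ∈ univ.image f, w a := by
  rw [← Finset.sum_image fun p hp q hq h =>
    (Finset.mem_filter.1 hp).2.eq (Finset.mem_filter.1 hq).2 h]
  congr 1
  ext a
  simp only [Finset.mem_image, Finset.mem_filter, Finset.mem_univ, true_and]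
  constructor
  · rintro ⟨p, -, rfl⟩
    exact ⟨p, rfl⟩
  · rintro ⟨i, rfl⟩
    obtain ⟨p, hp, hlast⟩ := exists_isLastInFiber f i
    exact ⟨p, hlast, hp⟩

lemma card_mul_sum_not_isLastInFiber_le [DecidableEq α] (f : ι → α) (w : α → ℝ)
    (hw : ∀ i, 0 ≤ w (f i)) :
    Fintype.card ι * ∑ i with ¬ IsLastInFiber f i, w (f i)
      ≤ (Fintype.card ι - 1) * ∑ i, w (f i) := by
  have hsplit := Finset.sum_filter_add_sum_filter_not univ (IsLastInFiber f) (w ∘ f)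
  have hbound := sum_comp_le_card_smul_sum_image f w hw
  rw [nsmul_eq_mul, ← sum_isLastInFiber] at hbound
  simp only [Function.comp_apply] at hsplit
  linear_combination (Fintype.card ι : ℝ) * hsplit + hbound

end LastInFiber

section Counting

variable {ι : Type*} [Fintype ι]

lemma exists_sqrt_eq_of_profile_eq {v w : ι → ℕ} (h : profile v = profile w) (i : ι) :
    ∃ j, (w j).sqrt = (v i).sqrt := by
  have hcard := congrArg (· (Sum.inl (v i).sqrt)) h
  simp only [profile_inl, Nat.cast_inj] at hcard
  obtain ⟨j, hj⟩ := Finset.card_pos.1 (hcard ▸ Finset.card_pos.2 ⟨i, by simp⟩)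
  exact ⟨j, (Finset.mem_filter.1 hj).2⟩

lemma eq_of_profile_eq [LinearOrder ι] {v u : ι → ℕ} (h : profile v = profile u)
    (hsqrt : ∀ i, (v i).sqrt = (u i).sqrt)
    (hrem : ∀ i, ¬ IsLastInFiber (fun i => (v i).sqrt) i → sqrtRem (v i) = sqrtRem (u i)) :
    v = u := by
  have hsum (m : ℕ) : ∑ i with (v i).sqrt = m, sqrtRem (v i)
      = ∑ i with (v i).sqrt = m, sqrtRem (u i) := by
    have := congrArg (· (Sum.inr m)) h
    simp only [profile_inr, ← hsqrt] at this
    exact_mod_cast this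
  have hrem' := eq_of_sum_fiber_eq_of_eqOn_not_isLastInFiber hsum hrem
  funext i
  rw [← sqrt_sq_add_sqrtRem (v i), ← sqrt_sq_add_sqrtRem (u i), hsqrt i, congrFun hrem' i]

/-- A member `v` of `S` is determined by its levels, which are among the at most `card ι` levels
of any fixed member, and by its remainders off the last coordinate of each level. -/
lemma ncard_le_of_profile_eq [LinearOrder ι] {S : Set (ι → ℕ)}
    (hS : ∀ v ∈ S, ∀ u ∈ S, profile v = profile u) {E : ℝ} (hE0 : 0 ≤ E)
    (hE : ∀ v ∈ S, ∏ i with ¬ IsLastInFiber (fun i => (v i).sqrt) i,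
      (2 * (v i).sqrt + 1 : ℝ) ≤ E) :
    (S.ncard : ℝ) ≤ Fintype.card ι ^ Fintype.card ι * E := by
  classical
  rcases S.eq_empty_or_nonempty with rfl | ⟨v₀, hv₀⟩
  · simpa using mul_nonneg (by positivity) hE0
  set L := univ.image fun i => (v₀ i).sqrt
  set P := (Fintype.piFinset fun _ : ι => L).filter fun f => ∃ v ∈ S, (fun i => (v i).sqrt) = f
  set R : (ι → ℕ) → Finset (ι → ℕ) := fun f =>
    Fintype.piFinset fun i => range (if IsLastInFiber f i then 1 else 2 * f i + 1)
  set Φ : (ι → ℕ) → Σ _ : ι → ℕ, ι → ℕ := fun v =>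
    ⟨fun i => (v i).sqrt,
      fun i => if IsLastInFiber (fun i => (v i).sqrt) i then 0 else sqrtRem (v i)⟩
  have hmaps : ∀ v ∈ S, Φ v ∈ P.sigma R := by
    intro v hv
    refine Finset.mem_sigma.2
      ⟨Finset.mem_filter.2 ⟨Fintype.mem_piFinset.2 fun i => ?_, v, hv, rfl⟩,
        Fintype.mem_piFinset.2 fun i => ?_⟩
    · obtain ⟨j, hj⟩ := exists_sqrt_eq_of_profile_eq (hS v hv v₀ hv₀) i
      exact Finset.mem_image.2 ⟨j, Finset.mem_univ j, hj⟩
    · have := sqrtRem_le (v i)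
      simp only [Φ, Finset.mem_range]
      split_ifs <;> omega
  have hinj : Set.InjOn Φ S := by
    intro v hv u hu h
    obtain ⟨hsqrt, hrem⟩ := Sigma.mk.inj_iff.1 h
    refine eq_of_profile_eq (hS v hv u hu) (congrFun hsqrt) fun i hi => ?_
    have := congrFun (eq_of_heq hrem) i
    rw [← hsqrt] at this
    simpa [hi] using this
  have hR : ∀ f ∈ P, (#(R f) : ℝ) ≤ E := by
    intro f hf
    obtain ⟨v, hv, rfl⟩ := (Finset.mem_filter.1 hf).2
    refine le_trans (le_of_eq ?_) (hE v hv)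
    simp only [R, Fintype.card_piFinset, Finset.card_range, Finset.prod_filter]
    push_cast
    exact Finset.prod_congr rfl fun i _ => by split_ifs <;> simp
  have hP : #P ≤ Fintype.card ι ^ Fintype.card ι :=
    calc #P ≤ #L ^ Fintype.card ι := by
          simpa using Finset.card_filter_le (Fintype.piFinset fun _ : ι => L) _
      _ ≤ Fintype.card ι ^ Fintype.card ι :=
          Nat.pow_le_pow_left (Finset.card_image_le.trans (by simp)) _
  calc (S.ncard : ℝ) ≤ #(P.sigma R) := by
        exact_mod_cast
          (Set.ncard_le_ncard_of_injOn Φ hmaps hinj).trans (Set.ncard_coe_finset _).le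
    _ = ∑ f ∈ P, (#(R f) : ℝ) := by rw [Finset.card_sigma]; push_cast; rfl
    _ ≤ #P * E := by simpa using Finset.sum_le_sum hR
    _ ≤ Fintype.card ι ^ Fintype.card ι * E := by gcongr; exact_mod_cast hP

end Counting

lemma apply_eq_add_sqrtRem_smul {l b c : ℕ → ℝ}
    (hl : ∀ m : ℕ, 1 ≤ m → ∀ j : ℕ, j ≤ 2 * m → l (m ^ 2 + j) = b m + (j : ℝ) * c m)
    {n : ℕ} (hn : 1 ≤ n) : l n = b n.sqrt + sqrtRem n • c n.sqrt := by
  rw [nsmul_eq_mul, ← hl _ (Nat.sqrt_pos.2 hn) _ (sqrtRem_le n), sqrt_sq_add_sqrtRem]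

lemma prod_two_mul_add_one_le_exp {ι : Type*} [Fintype ι] [LinearOrder ι] {b : ℕ → ℝ}
    (f : ι → ℕ) (hb : ∀ i, 0 ≤ b (f i)) (hb2 : ∀ i, (2 * f i + 1 : ℝ) ≤ Real.exp (b (f i)))
    (hι : 0 < Fintype.card ι) :
    ∏ i with ¬ IsLastInFiber f i, (2 * f i + 1 : ℝ)
      ≤ Real.exp ((Fintype.card ι - 1) * (∑ i, b (f i)) / Fintype.card ι) :=
  calc ∏ i with ¬ IsLastInFiber f i, (2 * f i + 1 : ℝ)
      ≤ ∏ i with ¬ IsLastInFiber f i, Real.exp (b (f i)) :=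
        Finset.prod_le_prod (fun i _ => by positivity) fun i _ => hb2 i
    _ = Real.exp (∑ i with ¬ IsLastInFiber f i, b (f i)) := (Real.exp_sum _ _).symm
    _ ≤ _ := Real.exp_le_exp.2 <| by
        rw [le_div_iff₀ (by exact_mod_cast hι)]
        linarith [card_mul_sum_not_isLastInFiber_le f b hb]

end RepresentationCount

open RepresentationCount in
theorem representation_count_bound_general (b c : ℕ → ℝ)
    (hbpos : ∀ n, 1 ≤ n → 0 < b n) (hcpos : ∀ n, 1 ≤ n → 0 < c n)
    (hind : ∀ N : ℕ, 1 ≤ N →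
      LinearIndependent ℚ (fun i : Fin N ⊕ Fin N =>
        (Sum.elim (fun j : Fin N => b (j.1 + 1)) (fun j : Fin N => c (j.1 + 1)) i : ℝ)))
    (hb2 : ∀ n : ℕ, 1 ≤ n → (2 * n + 1 : ℝ) ≤ Real.exp (b n))
    (l : ℕ → ℝ)
    (hl : ∀ m : ℕ, 1 ≤ m → ∀ j : ℕ, j ≤ 2 * m → l (m ^ 2 + j) = b m + (j : ℝ) * c m) :
    ∀ k : ℕ, 1 ≤ k → ∃ C > (0 : ℝ), ∀ μ > (0 : ℝ),
      (Set.ncard {v : Fin k → ℕ | (∀ i, 1 ≤ v i) ∧ ∑ i, l (v i) = μ} : ℝ) ≤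
        C * Real.exp (((k : ℝ) - 1) * μ / k) := by
  intro k hk
  refine ⟨k ^ k, by positivity, fun μ _ => ?_⟩
  set S := {v : Fin k → ℕ | (∀ i, 1 ≤ v i) ∧ ∑ i, l (v i) = μ}
  have hsum : ∀ v ∈ S, ∑ i, (b (v i).sqrt + sqrtRem (v i) • c (v i).sqrt) = μ := fun v hv => by
    rw [← hv.2]
    exact Finset.sum_congr rfl fun i _ => (apply_eq_add_sqrtRem_smul hl (hv.1 i)).symm
  have hprofile : ∀ v ∈ S, ∀ u ∈ S, profile v = profile u := fun v hv u hu =>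
    profile_eq_of_sum_eq (linearIndepOn_of_forall_fin hind) hv.1 hu.1
      ((hsum v hv).trans (hsum u hu).symm)
  have hlevels : ∀ v ∈ S, ∑ i, b (v i).sqrt ≤ μ := fun v hv => hsum v hv ▸
    Finset.sum_le_sum fun i _ =>
      le_add_of_nonneg_right (nsmul_nonneg (hcpos _ (Nat.sqrt_pos.2 (hv.1 i))).le _)
  have hk1 : (0 : ℝ) ≤ k - 1 := sub_nonneg.2 (Nat.one_le_cast.2 hk)
  simpa using ncard_le_of_profile_eq hprofile (Real.exp_pos _).le fun v hv =>
    (prod_two_mul_add_one_le_exp _ (fun i => (hbpos _ (Nat.sqrt_pos.2 (hv.1 i))).le)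
      (fun i => hb2 _ (Nat.sqrt_pos.2 (hv.1 i))) (by rwa [Fintype.card_fin])).trans
      (Real.exp_le_exp.2 (by rw [Fintype.card_fin]; gcongr; exact hlevels v hv))

/-- Combinatorial lemma: with `λ_{m²+j} = b_m + j c_m` (`m ≥ 1`, `0 ≤ j ≤ 2m`), where the
`b`'s and `c`'s are ℚ-linearly independent, `2n+1 ≤ e^{b_n}` and `n c_n ≤ 1`, for every
`k ≥ 1` there is `C_k > 0` with
`card{(n₁,…,n_k) : λ_{n₁}+⋯+λ_{n_k} = μ} ≤ C_k e^{(k−1)μ/k}` for all `μ > 0`. -/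
theorem representation_count_bound (b c : ℕ → ℝ)
    (hbpos : ∀ n, 1 ≤ n → 0 < b n) (hcpos : ∀ n, 1 ≤ n → 0 < c n)
    (hind : ∀ N : ℕ, 1 ≤ N →
      LinearIndependent ℚ (fun i : Fin N ⊕ Fin N =>
        (Sum.elim (fun j : Fin N => b (j.1 + 1)) (fun j : Fin N => c (j.1 + 1)) i : ℝ)))
    (hb2 : ∀ n : ℕ, 1 ≤ n → (2 * n + 1 : ℝ) ≤ Real.exp (b n))
    (hc1 : ∀ n : ℕ, 1 ≤ n → (n : ℝ) * c n ≤ 1)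
    (l : ℕ → ℝ)
    (hl : ∀ m : ℕ, 1 ≤ m → ∀ j : ℕ, j ≤ 2 * m → l (m ^ 2 + j) = b m + (j : ℝ) * c m) :
    ∀ k : ℕ, 1 ≤ k → ∃ C > (0 : ℝ), ∀ μ > (0 : ℝ),
      (Set.ncard {v : Fin k → ℕ | (∀ i, 1 ≤ v i) ∧ ∑ i, l (v i) = μ} : ℝ) ≤
        C * Real.exp (((k : ℝ) - 1) * μ / k) :=
  representation_count_bound_general b c hbpos hcpos hind hb2 l hl
end
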